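/- arXiv:1411.2855 — 11 statements merged into one kernel-verified Lean document; each statement's English description precedes it below -/
import Mathlib

section
/- Let R be a relation symbol and let C0, C1, …, Cn (n ≥ 1) be table completeness statements all for the relation R. Then {C1, …, Cn} entails C0 (i.e., every incomplete database satisfying C1, …, Cn also satisfies C0) if and only if the associated query Q_{C0} is contained under set semantics in the union Q_{C1} ∪ … ∪ Q_{Cn}. -/
/-!
Framework for completeness reasoning over relational databases
(Razniewski, "Query-driven Data Completeness Management").

The domain of constants is the dense linearly ordered set `ℚ`.
-/

/-- A relational signature: relation symbols with arities. -/
structure Sig where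
  Rel : Type
  arity : Rel → ℕ

/-- A (ground) fact over a signature `σ`. -/
structure DFact (σ : Sig) where
  rel : σ.Rel
  args : Fin (σ.arity rel) → ℚ

/-- A database: a set of facts (database *instances* are the finite ones). -/
abbrev DB (σ : Sig) := Set (DFact σ)

/-- Terms over a variable type `V`: variables or constants. -/
inductive Term (V : Type)
  | var : V → Term V
  | const : ℚ → Term V

/-- Evaluation of a term under a valuation. -/
def Term.eval {V : Type} (v : V → ℚ) : Term V → ℚ
  | .var x => v x
  | .const c => c

/-- A relational atom. -/
structure RAtom (σ : Sig) (V : Type) where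
  rel : σ.Rel
  args : Fin (σ.arity rel) → Term V

/-- Instantiating a relational atom by a valuation yields a fact. -/
def RAtom.inst {σ : Sig} {V : Type} (A : RAtom σ V) (v : V → ℚ) : DFact σ :=
  ⟨A.rel, fun i => (A.args i).eval v⟩

/-- A variable occurs in a relational atom. -/
def RAtom.hasVar {σ : Sig} {V : Type} (A : RAtom σ V) (x : V) : Prop :=
  ∃ i, A.args i = Term.var x

/-- Comparison operators `=`, `<`, `≤`. -/
inductive CmpOp
  | eq
  | lt
  | le

def CmpOp.holds : CmpOp → ℚ → ℚ → Prop
  | .eq, a, b => a = b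
  | .lt, a, b => a < b
  | .le, a, b => a ≤ b

/-- A comparison atom between two terms. -/
structure CAtom (V : Type) where
  op : CmpOp
  lhs : Term V
  rhs : Term V

def CAtom.holds {V : Type} (c : CAtom V) (v : V → ℚ) : Prop :=
  c.op.holds (c.lhs.eval v) (c.rhs.eval v)

/-- A condition: a set of relational atoms and a set of comparison atoms. -/
structure Condition (σ : Sig) (V : Type) where
  ratoms : Set (RAtom σ V)
  catoms : Set (CAtom V)

/-- The condition is a *finite* set of atoms. -/
def Condition.IsFinite {σ : Sig} {V : Type} (G : Condition σ V) : Prop :=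
  G.ratoms.Finite ∧ G.catoms.Finite

/-- A valuation satisfies a condition over a database: all instantiated relational
atoms belong to the database and all comparisons hold in `ℚ`. -/
def Condition.sat {σ : Sig} {V : Type} (G : Condition σ V) (v : V → ℚ) (D : DB σ) : Prop :=
  (∀ A ∈ G.ratoms, A.inst v ∈ D) ∧ (∀ c ∈ G.catoms, c.holds v)

/-- A conjunctive query `Q(x̄) :- B` with head arity `k`; its variables are `Fin nvars`. -/
structure CQ (σ : Sig) (k : ℕ) where
  nvars : ℕ
  head : Fin k → Term (Fin nvars)
  body : Condition σ (Fin nvars)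

/-- Safety: every variable occurs in some relational atom of the body. -/
def CQ.safe {σ : Sig} {k : ℕ} (Q : CQ σ k) : Prop :=
  ∀ x : Fin Q.nvars, ∃ A ∈ Q.body.ratoms, A.hasVar x

/-- The output tuple of a valuation. -/
def CQ.out {σ : Sig} {k : ℕ} (Q : CQ σ k) (v : Fin Q.nvars → ℚ) : Fin k → ℚ :=
  fun i => (Q.head i).eval v

/-- Set semantics: `Q^s(D)`. -/
def CQ.evalS {σ : Sig} {k : ℕ} (Q : CQ σ k) (D : DB σ) : Set (Fin k → ℚ) :=
  { t | ∃ v, Q.body.sat v D ∧ Q.out v = t }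

/-- Bag semantics: the multiplicity of an answer tuple `t` in `Q^b(D)`, i.e. the
number of satisfying valuations yielding `t`. -/
noncomputable def CQ.mult {σ : Sig} {k : ℕ} (Q : CQ σ k) (D : DB σ) (t : Fin k → ℚ) : ℕ :=
  Set.ncard { v : Fin Q.nvars → ℚ | Q.body.sat v D ∧ Q.out v = t }

/-- Equality of the bags `Q^b(D₁)` and `Q^b(D₂)`. -/
def CQ.bagEq {σ : Sig} {k : ℕ} (Q : CQ σ k) (D₁ D₂ : DB σ) : Prop :=
  ∀ t, Q.mult D₁ t = Q.mult D₂ t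

/-- An incomplete database `𝒟 = (D̂, Ď)`: available ⊆ ideal, both finite. -/
structure IncDB (σ : Sig) where
  ideal : DB σ
  avail : DB σ
  sub : avail ⊆ ideal
  fin : ideal.Finite

/-- `𝒟 ⊨ Compl^s(Q)`. -/
def IncDB.complS {σ : Sig} {k : ℕ} (𝒟 : IncDB σ) (Q : CQ σ k) : Prop :=
  Q.evalS 𝒟.avail = Q.evalS 𝒟.ideal

/-- `𝒟 ⊨ Compl^b(Q)`. -/
def IncDB.complB {σ : Sig} {k : ℕ} (𝒟 : IncDB σ) (Q : CQ σ k) : Prop :=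
  Q.bagEq 𝒟.avail 𝒟.ideal

/-- A table completeness statement `Compl(R(t̄); G)` for the relation `R`. -/
structure TCStmt (σ : Sig) (R : σ.Rel) where
  nvars : ℕ
  args : Fin (σ.arity R) → Term (Fin nvars)
  cond : Condition σ (Fin nvars)

/-- The instantiated head fact `R(v t̄)` of a TCS statement. -/
def TCStmt.headFact {σ : Sig} {R : σ.Rel} (C : TCStmt σ R) (v : Fin C.nvars → ℚ) : DFact σ :=
  ⟨R, fun i => (C.args i).eval v⟩

/-- Safety of a TCS statement: every variable occurs in a relational atom of `{R(t̄)} ∪ G`. -/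
def TCStmt.safe {σ : Sig} {R : σ.Rel} (C : TCStmt σ R) : Prop :=
  ∀ x : Fin C.nvars, (∃ i, C.args i = Term.var x) ∨ ∃ A ∈ C.cond.ratoms, A.hasVar x

/-- `𝒟 ⊨ Compl(R(t̄); G)`: every fact `R(d̄)` with `d̄ ∈ Q_C^s(D̂)` belongs to `Ď`. -/
def TCStmt.sats {σ : Sig} {R : σ.Rel} (C : TCStmt σ R) (𝒟 : IncDB σ) : Prop :=
  ∀ v, C.headFact v ∈ 𝒟.ideal → C.cond.sat v 𝒟.ideal → C.headFact v ∈ 𝒟.avail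

/-- A TCS statement packaged together with its relation symbol. -/
structure TCS (σ : Sig) where
  rel : σ.Rel
  stmt : TCStmt σ rel

def TCS.sats {σ : Sig} (C : TCS σ) (𝒟 : IncDB σ) : Prop := C.stmt.sats 𝒟
def TCS.safe {σ : Sig} (C : TCS σ) : Prop := C.stmt.safe
/-- A relational TCS statement: no comparisons in the condition. -/
def TCS.relational {σ : Sig} (C : TCS σ) : Prop := C.stmt.cond.catoms = ∅
def TCS.isFinite {σ : Sig} (C : TCS σ) : Prop := C.stmt.cond.IsFinite

/-- Satisfaction of all canonical completeness statements `𝒞_Q` of `Q`: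
for each relational atom `Aᵢ` of the body, the statement
`Cᵢ = Compl(Aᵢ; {A₁,…,Aₙ} \ {Aᵢ} ∪ M)` is satisfied, i.e. every valuation that
satisfies the whole body over the ideal database has its instance of `Aᵢ` in the
available database. -/
def CQ.canonSat {σ : Sig} {k : ℕ} (Q : CQ σ k) (𝒟 : IncDB σ) : Prop :=
  ∀ A ∈ Q.body.ratoms, ∀ v, Q.body.sat v 𝒟.ideal → A.inst v ∈ 𝒟.avail

/-- Projection-free: every variable occurs in the head. -/
def CQ.projFree {σ : Sig} {k : ℕ} (Q : CQ σ k) : Prop :=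
  ∀ x : Fin Q.nvars, ∃ i, Q.head i = Term.var x

/-- The query obtained from `Q` by removing the relational atom `A` from its body. -/
def CQ.drop {σ : Sig} {k : ℕ} (Q : CQ σ k) (A : RAtom σ (Fin Q.nvars)) : CQ σ k :=
  ⟨Q.nvars, Q.head, ⟨Q.body.ratoms \ {A}, Q.body.catoms⟩⟩

/-- Set-equivalence of two queries of the same arity. -/
def CQ.setEquiv {σ : Sig} {k : ℕ} (Q Q' : CQ σ k) : Prop :=
  ∀ D : DB σ, D.Finite → Q.evalS D = Q'.evalS D

/-- Minimality: no relational atom can be removed without losing set-equivalence. -/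
def CQ.minimal {σ : Sig} {k : ℕ} (Q : CQ σ k) : Prop :=
  ∀ A ∈ Q.body.ratoms, ¬ Q.setEquiv (Q.drop A)

/-- A valuation satisfies the unfolding `Q^𝒞` of `Q` w.r.t. the TCS statements `𝒞`
over `D`: the comparisons of `Q` hold and every body atom is matched in `D` by the
head of some statement of `𝒞` whose condition is satisfied (the variables of the
statements being renamed apart from `Q` and from each other). -/
def unfoldSat {σ : Sig} {k : ℕ} (Q : CQ σ k) (𝒞 : Set (TCS σ))
    (v : Fin Q.nvars → ℚ) (D : DB σ) : Prop :=
  (∀ c ∈ Q.body.catoms, c.holds v) ∧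
  ∀ A ∈ Q.body.ratoms, A.inst v ∈ D ∧
    ∃ C ∈ 𝒞, ∃ w : Fin C.stmt.nvars → ℚ, C.stmt.cond.sat w D ∧ C.stmt.headFact w = A.inst v

/-- The set-semantics answer `(Q^𝒞)^s(D)` of the unfolded query. -/
def unfoldEvalS {σ : Sig} {k : ℕ} (Q : CQ σ k) (𝒞 : Set (TCS σ)) (D : DB σ) :
    Set (Fin k → ℚ) :=
  { t | ∃ v, unfoldSat Q 𝒞 v D ∧ Q.out v = t }

/-- `T_C(D) = { R(d̄) : d̄ ∈ Q_C^s(D) }`. -/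
def TCS.T {σ : Sig} (C : TCS σ) (D : DB σ) : Set (DFact σ) :=
  { f | ∃ v, C.stmt.headFact v ∈ D ∧ C.stmt.cond.sat v D ∧ f = C.stmt.headFact v }

/-- `T_𝒞(D) = ⋃_{C ∈ 𝒞} T_C(D)`. -/
def TSet {σ : Sig} (𝒞 : Set (TCS σ)) (D : DB σ) : Set (DFact σ) :=
  ⋃ C ∈ 𝒞, C.T D

/-- Constants occurring in a term. -/
def Term.consts {V : Type} : Term V → Set ℚ
  | .var _ => ∅
  | .const c => {c}

def RAtom.consts {σ : Sig} {V : Type} (A : RAtom σ V) : Set ℚ :=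
  ⋃ i, (A.args i).consts

def CAtom.consts {V : Type} (c : CAtom V) : Set ℚ :=
  c.lhs.consts ∪ c.rhs.consts

def Condition.consts {σ : Sig} {V : Type} (G : Condition σ V) : Set ℚ :=
  (⋃ A ∈ G.ratoms, A.consts) ∪ ⋃ c ∈ G.catoms, c.consts

def CQ.consts {σ : Sig} {k : ℕ} (Q : CQ σ k) : Set ℚ :=
  (⋃ i, (Q.head i).consts) ∪ Q.body.consts

def TCS.consts {σ : Sig} (C : TCS σ) : Set ℚ :=
  (⋃ i, (C.stmt.args i).consts) ∪ C.stmt.cond.consts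

/-- The set-semantics answer of the associated query `Q_C(t̄) :- R(t̄), G` of a
table completeness statement `C = Compl(R(t̄); G)`. -/
def TCStmt.assocEvalS {σ : Sig} {R : σ.Rel} (C : TCStmt σ R) (D : DB σ) :
    Set (Fin (σ.arity R) → ℚ) :=
  { t | ∃ v, C.headFact v ∈ D ∧ C.cond.sat v D ∧ (fun i => (C.args i).eval v) = t }

/-- For TC statements `C₀, C₁, …, Cₙ` (n ≥ 1), all for the relation `R`:
`{C₁, …, Cₙ}` entails `C₀` iff `Q_{C₀}` is contained under set semantics in the union
`Q_{C₁} ∪ … ∪ Q_{Cₙ}`. -/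
theorem tc_tc_entailment_iff_union_containment
    (σ : Sig) (R : σ.Rel) (n : ℕ) (hn : 1 ≤ n)
    (C₀ : TCStmt σ R) (C : Fin n → TCStmt σ R)
    (hC₀safe : C₀.safe) (hC₀fin : C₀.cond.IsFinite)
    (hCsafe : ∀ i, (C i).safe) (hCfin : ∀ i, (C i).cond.IsFinite) :
    (∀ 𝒟 : IncDB σ, (∀ i, (C i).sats 𝒟) → C₀.sats 𝒟) ↔
      ∀ D : DB σ, D.Finite → C₀.assocEvalS D ⊆ ⋃ i, (C i).assocEvalS D := by
  constructor
  · -- entailment → containment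
    intro hent D hD t ht
    by_contra hnot
    obtain ⟨v, hv1, hv2, hv3⟩ := ht
    have hfact : C₀.headFact v = ⟨R, t⟩ := by
      simp only [TCStmt.headFact, ← hv3]
    set f : DFact σ := C₀.headFact v with hf
    let 𝒟 : IncDB σ := ⟨D, D \ {f}, Set.diff_subset, hD⟩
    have hsats : ∀ i, (C i).sats 𝒟 := by
      intro i w hw1 hw2
      refine ⟨hw1, ?_⟩
      intro heq
      apply hnot
      have heq' : (C i).headFact w = ⟨R, t⟩ := by
        simpa [Set.mem_singleton_iff, hfact] using heq
      have hargs : (fun j => ((C i).args j).eval w) = t := by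
        simp only [TCStmt.headFact, DFact.mk.injEq, heq_eq_eq, true_and] at heq'
        exact heq'
      exact Set.mem_iUnion.2 ⟨i, w, hw1, hw2, hargs⟩
    have hsat0 := hent 𝒟 hsats v hv1 hv2
    exact hsat0.2 rfl
  · -- containment → entailment
    intro hcont 𝒟 hsats v hv1 hv2
    have ht : (fun i => (C₀.args i).eval v) ∈ C₀.assocEvalS 𝒟.ideal :=
      ⟨v, hv1, hv2, rfl⟩
    obtain ⟨i, w, hw1, hw2, hw3⟩ := Set.mem_iUnion.1 (hcont 𝒟.ideal 𝒟.fin ht)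
    have hhead : (C i).headFact w = C₀.headFact v := by
      simp only [TCStmt.headFact]
      exact congrArg _ hw3
    have := hsats i w hw1 hw2
    rwa [hhead] at this
end

section
/- For every conjunctive query Q and every incomplete database 𝒟 = (D̂, Ď): 𝒟 satisfies Compl^b(Q) (bag-semantics completeness of Q) if and only if 𝒟 satisfies every canonical completeness statement in 𝒞_Q. -/
/-- For every conjunctive query `Q` and every incomplete database `𝒟`:
`𝒟 ⊨ Compl^b(Q)` iff `𝒟` satisfies every canonical completeness statement in `𝒞_Q`. -/
theorem bag_completeness_iff_canonical_statements
    (σ : Sig) (k : ℕ) (Q : CQ σ k)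
    (hsafe : Q.safe) (hfin : Q.body.IsFinite)
    (𝒟 : IncDB σ) :
    𝒟.complB Q ↔ Q.canonSat 𝒟 := by
  -- subset relation between satisfying valuation sets
  have hsub : ∀ t, { v : Fin Q.nvars → ℚ | Q.body.sat v 𝒟.avail ∧ Q.out v = t } ⊆
      { v | Q.body.sat v 𝒟.ideal ∧ Q.out v = t } := by
    intro t v hv
    exact ⟨⟨fun A hA => 𝒟.sub (hv.1.1 A hA), hv.1.2⟩, hv.2⟩
  -- finiteness of the ideal satisfying-valuation sets (using safety and finiteness)
  have hVals : (⋃ f ∈ 𝒟.ideal, Set.range f.args).Finite :=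
    𝒟.fin.biUnion fun f _ => Set.finite_range f.args
  have hfinset : ∀ t, ({ v : Fin Q.nvars → ℚ | Q.body.sat v 𝒟.ideal ∧ Q.out v = t }).Finite := by
    intro t
    apply Set.Finite.subset (Set.Finite.pi (fun _ : Fin Q.nvars => hVals))
    intro v hv
    rw [Set.mem_pi]
    intro x _
    obtain ⟨A, hA, i, hi⟩ := hsafe x
    have hmem : A.inst v ∈ 𝒟.ideal := hv.1.1 A hA
    refine Set.mem_biUnion hmem ⟨i, ?_⟩
    show (A.args i).eval v = v x
    rw [hi]; rfl
  constructor
  · intro hB A hA v hv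
    have key : { w : Fin Q.nvars → ℚ | Q.body.sat w 𝒟.avail ∧ Q.out w = Q.out v } =
        { w | Q.body.sat w 𝒟.ideal ∧ Q.out w = Q.out v } := by
      apply Set.eq_of_subset_of_ncard_le (hsub _) _ (hfinset _)
      exact le_of_eq (hB (Q.out v)).symm
    have : v ∈ { w : Fin Q.nvars → ℚ | Q.body.sat w 𝒟.avail ∧ Q.out w = Q.out v } := by
      rw [key]; exact ⟨hv, rfl⟩
    exact this.1.1 A hA
  · intro hC t
    unfold CQ.mult
    congr 1
    apply Set.Subset.antisymm (hsub t)
    intro v hv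
    exact ⟨⟨fun A hA => hC A hA v hv.1, hv.1.2⟩, hv.2⟩
end

section
/- Let Q be a projection-free conjunctive query (every variable of the body occurs among the distinguished variables). Then for every incomplete database 𝒟 = (D̂, Ď): 𝒟 satisfies Compl^s(Q) if and only if 𝒟 satisfies every canonical completeness statement in 𝒞_Q. -/
/-- For a projection-free conjunctive query `Q` and every incomplete
database `𝒟`: `𝒟 ⊨ Compl^s(Q)` iff `𝒟` satisfies every canonical completeness
statement in `𝒞_Q`. -/
theorem set_completeness_iff_canonical_statements_of_projFree
    (σ : Sig) (k : ℕ) (Q : CQ σ k)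
    (hsafe : Q.safe) (hfin : Q.body.IsFinite) (hpf : Q.projFree)
    (𝒟 : IncDB σ) :
    𝒟.complS Q ↔ Q.canonSat 𝒟 := by
  constructor
  · intro hc A hA v hv
    have hout : Q.out v ∈ Q.evalS 𝒟.ideal := ⟨v, hv, rfl⟩
    rw [← hc] at hout
    obtain ⟨v', hv', hout'⟩ := hout
    have hvv : v' = v := by
      funext x
      obtain ⟨i, hi⟩ := hpf x
      have := congrFun hout' i
      simpa [CQ.out, hi, Term.eval] using this
    exact hvv ▸ hv'.1 A hA
  · intro hcan
    apply Set.Subset.antisymm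
    · rintro t ⟨v, hv, rfl⟩
      exact ⟨v, ⟨fun A hA => 𝒟.sub (hv.1 A hA), hv.2⟩, rfl⟩
    · rintro t ⟨v, hv, rfl⟩
      exact ⟨v, ⟨fun A hA => hcan A hA v hv, hv.2⟩, rfl⟩
end

section
/- For every conjunctive query Q, the set 𝒞_Q of canonical completeness statements of Q entails both Compl^s(Q) and Compl^b(Q): every incomplete database (D̂, Ď) satisfying all statements of 𝒞_Q satisfies Q^s(Ď) = Q^s(D̂) and Q^b(Ď) = Q^b(D̂). -/
/-- For every conjunctive query `Q`, the canonical completeness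
statements `𝒞_Q` entail both `Compl^s(Q)` and `Compl^b(Q)`. -/
theorem canonical_statements_entail_completeness
    (σ : Sig) (k : ℕ) (Q : CQ σ k)
    (hsafe : Q.safe) (hfin : Q.body.IsFinite)
    (𝒟 : IncDB σ) (h : Q.canonSat 𝒟) :
    𝒟.complS Q ∧ 𝒟.complB Q := by
  have key : ∀ v : Fin Q.nvars → ℚ, Q.body.sat v 𝒟.avail ↔ Q.body.sat v 𝒟.ideal := by
    intro v
    constructor
    · rintro ⟨hr, hc⟩
      exact ⟨fun A hA => 𝒟.sub (hr A hA), hc⟩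
    · rintro ⟨hr, hc⟩
      exact ⟨fun A hA => h A hA v ⟨hr, hc⟩, hc⟩
  constructor
  · ext t
    constructor
    · rintro ⟨v, hv, ht⟩
      exact ⟨v, (key v).1 hv, ht⟩
    · rintro ⟨v, hv, ht⟩
      exact ⟨v, (key v).2 hv, ht⟩
  · intro t
    unfold CQ.mult
    congr 1
    ext v
    simp only [Set.mem_setOf_eq]
    exact and_congr_left' (key v)
end

section
/- Let Q0, Q1, …, Qn be conjunctive queries of the same head arity over the signature Σ, with Qi of the form Qi(t̄i) :- Bi, and let S be a fresh relation symbol of that arity not occurring in Σ. Define the query Q(t̄0) :- S(t̄0), B0 over the signature Σ ∪ {S}, and the TC statements Ci = Compl(S(t̄i); Bi) for i = 1, …, n together with C_R = Compl(R(x̄_R); ∅) for every R ∈ Σ, where x̄_R is a tuple of distinct variables. Let 𝒞 = {C1, …, Cn} ∪ {C_R : R ∈ Σ}. Then for each * ∈ {s, b}: 𝒞 entails Compl^*(Q) if and only if Q0 is contained under set semantics in Q1 ∪ … ∪ Qn. -/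
/-- The signature `Σ ∪ {S}`, extending `σ` with one fresh relation symbol (`none`)
of arity `k`. -/
def Sig.ext (σ : Sig) (k : ℕ) : Sig where
  Rel := Option σ.Rel
  arity := fun R => match R with
    | none => k
    | some r => σ.arity r

/-- Lifting a relational atom over `σ` to the extended signature. -/
def RAtom.lift (k : ℕ) {σ : Sig} {V : Type} (A : RAtom σ V) : RAtom (σ.ext k) V :=
  ⟨some A.rel, A.args⟩

/-- Lifting a condition over `σ` to the extended signature. -/
def Condition.lift (k : ℕ) {σ : Sig} {V : Type} (G : Condition σ V) :
    Condition (σ.ext k) V :=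
  ⟨(RAtom.lift k) '' G.ratoms, G.catoms⟩

/-- The query `Q(t̄₀) :- S(t̄₀), B₀` over the extended signature. -/
def extQuery {σ : Sig} {k : ℕ} (Q₀ : CQ σ k) : CQ (σ.ext k) k where
  nvars := Q₀.nvars
  head := Q₀.head
  body := ⟨insert ⟨none, Q₀.head⟩ ((RAtom.lift k) '' Q₀.body.ratoms), Q₀.body.catoms⟩

/-- The TC statement `Cᵢ = Compl(S(t̄ᵢ); Bᵢ)` for the query `Qᵢ(t̄ᵢ) :- Bᵢ`. -/
def sStmt {σ : Sig} {k : ℕ} (Qi : CQ σ k) : TCStmt (σ.ext k) none :=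
  ⟨Qi.nvars, Qi.head, Qi.body.lift k⟩

/-- The TC statement `C_R = Compl(R(x̄_R); ∅)` for `R ∈ Σ`, `x̄_R` distinct variables. -/
def copyStmt (σ : Sig) (k : ℕ) (R : σ.Rel) : TCStmt (σ.ext k) (some R) :=
  ⟨σ.arity R, fun i => Term.var i, ⟨∅, ∅⟩⟩

/-! ### Auxiliary lemmas -/

lemma Condition.sat_mono {σ : Sig} {V : Type} {G : Condition σ V} {v : V → ℚ}
    {D₁ D₂ : DB σ} (h : D₁ ⊆ D₂) (hs : G.sat v D₁) : G.sat v D₂ :=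
  ⟨fun A hA => h (hs.1 A hA), hs.2⟩

/-- Lifting a fact over `σ` to the extended signature. -/
def liftFact (k : ℕ) {σ : Sig} (f : DFact σ) : DFact (σ.ext k) :=
  ⟨some f.rel, f.args⟩

lemma liftFact_inj (k : ℕ) {σ : Sig} : Function.Injective (liftFact k (σ := σ)) := by
  rintro ⟨r₁, a₁⟩ ⟨r₂, a₂⟩ h
  have h := DFact.mk.inj (show (⟨some r₁, a₁⟩ : DFact (σ.ext k)) = ⟨some r₂, a₂⟩ from h)
  obtain ⟨h1, h2⟩ := h
  obtain rfl : r₁ = r₂ := Option.some.inj h1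
  rw [eq_of_heq h2]

lemma lift_inst (k : ℕ) {σ : Sig} {V : Type} (A : RAtom σ V) (v : V → ℚ) :
    (A.lift k).inst v = liftFact k (A.inst v) := rfl

/-- With a safe query and a finite database, the set of satisfying valuations is
finite. -/
lemma sat_valuations_finite {σ : Sig} {k : ℕ} (Q : CQ σ k) (hQ : Q.safe)
    (D : DB σ) (hD : D.Finite) :
    {v : Fin Q.nvars → ℚ | Q.body.sat v D}.Finite := by
  have hV : (⋃ f ∈ D, Set.range f.args).Finite :=
    hD.biUnion (fun f _ => Set.finite_range _)
  refine (Set.Finite.pi (fun _ : Fin Q.nvars => hV)).subset ?_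
  intro v hv
  rw [Set.mem_pi]
  intro x _
  obtain ⟨A, hA, i, hi⟩ := hQ x
  refine Set.mem_biUnion (hv.1 A hA) ⟨i, ?_⟩
  show (A.args i).eval v = v x
  rw [hi]; rfl

/-- The extended query is safe if the original query is. -/
lemma extQuery_safe {σ : Sig} {k : ℕ} (Q₀ : CQ σ k) (h : Q₀.safe) :
    (extQuery Q₀).safe := by
  intro x
  obtain ⟨A, hA, i, hi⟩ := h x
  exact ⟨A.lift k, Set.mem_insert_iff.mpr (Or.inr ⟨A, hA, rfl⟩), i, hi⟩

/-- With `Q(t̄₀) :- S(t̄₀), B₀` and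
`𝒞 = {C₁, …, Cₙ} ∪ {C_R : R ∈ Σ}` as constructed, for each `* ∈ {s, b}`:
`𝒞 ⊨ Compl^*(Q)` iff `Q₀` is contained under set semantics in `Q₁ ∪ … ∪ Qₙ`. -/
theorem tcqc_entailment_iff_union_containment
    (σ : Sig) (k n : ℕ)
    (Q₀ : CQ σ k) (Qs : Fin n → CQ σ k)
    (h₀safe : Q₀.safe) (h₀fin : Q₀.body.IsFinite)
    (hsafe : ∀ i, (Qs i).safe) (hfin : ∀ i, (Qs i).body.IsFinite) :
    ((∀ 𝒟 : IncDB (σ.ext k),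
        (∀ i, (sStmt (Qs i)).sats 𝒟) → (∀ R : σ.Rel, (copyStmt σ k R).sats 𝒟) →
        𝒟.complS (extQuery Q₀)) ↔
      (∀ D : DB σ, D.Finite → Q₀.evalS D ⊆ ⋃ i, (Qs i).evalS D)) ∧
    ((∀ 𝒟 : IncDB (σ.ext k),
        (∀ i, (sStmt (Qs i)).sats 𝒟) → (∀ R : σ.Rel, (copyStmt σ k R).sats 𝒟) →
        𝒟.complB (extQuery Q₀)) ↔
      (∀ D : DB σ, D.Finite → Q₀.evalS D ⊆ ⋃ i, (Qs i).evalS D)) := by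

  -- Key construction for the "if" direction: under the completeness statements,
  -- every valuation satisfying the body of `Q` over the ideal database also
  -- satisfies it over the available database.
  have dirBack : (∀ D : DB σ, D.Finite → Q₀.evalS D ⊆ ⋃ i, (Qs i).evalS D) →
      ∀ 𝒟 : IncDB (σ.ext k),
        (∀ i, (sStmt (Qs i)).sats 𝒟) → (∀ R : σ.Rel, (copyStmt σ k R).sats 𝒟) →
        ∀ v, (extQuery Q₀).body.sat v 𝒟.ideal → (extQuery Q₀).body.sat v 𝒟.avail := by
    intro hcont 𝒟 hS hR v hv
    -- σ-facts of the ideal database are available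
    have hcopy : ∀ f : DFact σ, liftFact k f ∈ 𝒟.ideal → liftFact k f ∈ 𝒟.avail := by
      intro f hf
      exact hR f.rel f.args hf
        ⟨fun A hA => (Set.notMem_empty _ hA).elim, fun c hc => (Set.notMem_empty _ hc).elim⟩
    -- the σ-reduct of the ideal database
    set D : DB σ := liftFact k ⁻¹' 𝒟.ideal with hDdef
    have hDfin : D.Finite := 𝒟.fin.preimage (liftFact_inj k).injOn
    have hvD : Q₀.body.sat v D := by
      refine ⟨fun A hA => ?_, hv.2⟩
      exact hv.1 (A.lift k) (Set.mem_insert_iff.mpr (Or.inr ⟨A, hA, rfl⟩))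
    have hSfact : RAtom.inst ⟨none, Q₀.head⟩ v ∈ 𝒟.ideal :=
      hv.1 ⟨none, Q₀.head⟩ (Set.mem_insert _ _)
    obtain ⟨i, w, hw, hout⟩ :=
      Set.mem_iUnion.mp (hcont D hDfin ⟨v, hvD, rfl⟩)
    -- the head fact of statement `Cᵢ` under `w` is exactly the `S`-fact
    have hhead : (sStmt (Qs i)).headFact w = RAtom.inst ⟨none, Q₀.head⟩ v := by
      show (⟨none, (Qs i).out w⟩ : DFact (σ.ext k)) = ⟨none, Q₀.out v⟩
      rw [hout]
    have hSavail : (sStmt (Qs i)).headFact w ∈ 𝒟.avail := by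
      refine hS i w (hhead ▸ hSfact) ⟨?_, hw.2⟩
      rintro B ⟨A, hA, rfl⟩
      exact hw.1 A hA
    refine ⟨fun B hB => ?_, hv.2⟩
    rcases Set.mem_insert_iff.mp hB with rfl | ⟨A, hA, rfl⟩
    · exact hhead ▸ hSavail
    · exact hcopy (A.inst v) (hv.1 (A.lift k) (Set.mem_insert_iff.mpr (Or.inr ⟨A, hA, rfl⟩)))
  -- Counterexample construction for the "only if" direction.
  have cex : ¬ (∀ D : DB σ, D.Finite → Q₀.evalS D ⊆ ⋃ i, (Qs i).evalS D) →
      ∃ 𝒟 : IncDB (σ.ext k),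
        (∀ i, (sStmt (Qs i)).sats 𝒟) ∧ (∀ R : σ.Rel, (copyStmt σ k R).sats 𝒟) ∧
        ¬ 𝒟.complS (extQuery Q₀) ∧ ¬ 𝒟.complB (extQuery Q₀) := by
    intro hnc
    push_neg at hnc
    obtain ⟨D, hDfin, hns⟩ := hnc
    obtain ⟨t, ht0, htnot⟩ := Set.not_subset.mp hns
    obtain ⟨v₀, hv₀, hout₀⟩ := ht0
    refine ⟨⟨insert (⟨none, t⟩ : DFact (σ.ext k)) (liftFact k '' D), liftFact k '' D,
      Set.subset_insert _ _, ((hDfin.image _).insert _)⟩, ?_, ?_, ?_, ?_⟩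
    · -- statements Cᵢ hold (vacuously)
      intro i w hhd hcond
      exfalso
      rcases Set.mem_insert_iff.mp hhd with heq | ⟨f, _, hfe⟩
      · have heq := (DFact.mk.injEq _ _ _ _).mp heq
        have hargs : (Qs i).out w = t := eq_of_heq heq.2
        refine htnot (Set.mem_iUnion.mpr ⟨i, w, ⟨fun A hA => ?_, hcond.2⟩, hargs⟩)
        have hmem := hcond.1 (A.lift k) ⟨A, hA, rfl⟩
        rcases Set.mem_insert_iff.mp hmem with h | ⟨g, hg, hge⟩
        · exact (Option.some_ne_none _ (congrArg DFact.rel h)).elim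
        · exact (liftFact_inj k (hge.trans (lift_inst k A w))) ▸ hg
      · exact Option.some_ne_none _ (congrArg DFact.rel hfe)
    · -- statements C_R hold
      intro R w hhd _
      rcases Set.mem_insert_iff.mp hhd with heq | hmem
      · exact (Option.some_ne_none _ (congrArg DFact.rel heq)).elim
      · exact hmem
    · -- Compl^s(Q) fails
      intro hcS
      have htIdeal : t ∈ (extQuery Q₀).evalS
          (insert (⟨none, t⟩ : DFact (σ.ext k)) (liftFact k '' D)) := by
        refine ⟨v₀, ⟨fun B hB => ?_, hv₀.2⟩, hout₀⟩
        rcases Set.mem_insert_iff.mp hB with rfl | ⟨A, hA, rfl⟩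
        · have : RAtom.inst ⟨none, Q₀.head⟩ v₀ = (⟨none, t⟩ : DFact (σ.ext k)) := by
            show (⟨none, Q₀.out v₀⟩ : DFact (σ.ext k)) = ⟨none, t⟩
            rw [hout₀]
          exact Set.mem_insert_iff.mpr (Or.inl this)
        · exact Set.mem_insert_iff.mpr (Or.inr ⟨A.inst v₀, hv₀.1 A hA, rfl⟩)
      rw [← hcS] at htIdeal
      obtain ⟨v, hv, _⟩ := htIdeal
      obtain ⟨f, _, hfe⟩ := hv.1 ⟨none, Q₀.head⟩ (Set.mem_insert _ _)
      exact Option.some_ne_none _ (congrArg DFact.rel hfe)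
    · -- Compl^b(Q) fails
      intro hcB
      have hB := hcB t
      have h0 : {v | (extQuery Q₀).body.sat v (liftFact k '' D) ∧
          (extQuery Q₀).out v = t} = ∅ := by
        ext v
        simp only [Set.mem_setOf_eq, Set.mem_empty_iff_false, iff_false, not_and]
        intro hv
        obtain ⟨f, _, hfe⟩ := hv.1 ⟨none, Q₀.head⟩ (Set.mem_insert _ _)
        exact (Option.some_ne_none _ (congrArg DFact.rel hfe)).elim
      have h1 : 0 < ((extQuery Q₀).mult
          (insert (⟨none, t⟩ : DFact (σ.ext k)) (liftFact k '' D)) t) := by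
        have hfin' : {v | (extQuery Q₀).body.sat v
            (insert (⟨none, t⟩ : DFact (σ.ext k)) (liftFact k '' D)) ∧
            (extQuery Q₀).out v = t}.Finite :=
          (sat_valuations_finite (extQuery Q₀) (extQuery_safe Q₀ h₀safe) _
            ((hDfin.image _).insert _)).subset (fun v hv => hv.1)
        rw [CQ.mult]
        refine (Set.ncard_pos hfin').mpr ⟨v₀, ⟨fun B hB' => ?_, hv₀.2⟩, hout₀⟩
        rcases Set.mem_insert_iff.mp hB' with rfl | ⟨A, hA, rfl⟩
        · have : RAtom.inst ⟨none, Q₀.head⟩ v₀ = (⟨none, t⟩ : DFact (σ.ext k)) := by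
            show (⟨none, Q₀.out v₀⟩ : DFact (σ.ext k)) = ⟨none, t⟩
            rw [hout₀]
          exact Set.mem_insert_iff.mpr (Or.inl this)
        · exact Set.mem_insert_iff.mpr (Or.inr ⟨A.inst v₀, hv₀.1 A hA, rfl⟩)
      have h0' : (extQuery Q₀).mult (liftFact k '' D) t = 0 := by
        rw [CQ.mult, h0, Set.ncard_empty]
      have hB' : (extQuery Q₀).mult (liftFact k '' D) t =
          (extQuery Q₀).mult (insert (⟨none, t⟩ : DFact (σ.ext k)) (liftFact k '' D)) t := hB
      omega
  constructor
  · constructor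
    · intro hent
      by_contra hnc
      obtain ⟨𝒟, h1, h2, hns, _⟩ := cex hnc
      exact hns (hent 𝒟 h1 h2)
    · intro hcont 𝒟 h1 h2
      apply Set.eq_of_subset_of_subset
      · rintro t ⟨v, hv, rfl⟩
        exact ⟨v, Condition.sat_mono 𝒟.sub hv, rfl⟩
      · rintro t ⟨v, hv, rfl⟩
        exact ⟨v, dirBack hcont 𝒟 h1 h2 v hv, rfl⟩
  · constructor
    · intro hent
      by_contra hnc
      obtain ⟨𝒟, h1, h2, _, hnb⟩ := cex hnc
      exact hnb (hent 𝒟 h1 h2)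
    · intro hcont 𝒟 h1 h2 t
      unfold CQ.mult
      congr 1
      ext v
      simp only [Set.mem_setOf_eq]
      exact and_congr_left fun _ =>
        ⟨Condition.sat_mono 𝒟.sub, dirBack hcont 𝒟 h1 h2 v⟩
end

section
/- Let 𝒞 be a set of TC statements and Q a conjunctive query. Then 𝒞 entails Compl^s(Q) if and only if Q ⊆ Q^𝒞, i.e., Q^s(D) ⊆ (Q^𝒞)^s(D) for every database instance D. -/
/-- `𝒞 ⊨ Compl^s(Q)` iff `Q ⊆ Q^𝒞`, i.e. `Q^s(D) ⊆ (Q^𝒞)^s(D)` for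
every database instance `D`. -/
theorem tcqc_entailment_iff_containment_in_unfolding
    (σ : Sig) (k : ℕ) (Q : CQ σ k)
    (hsafe : Q.safe) (hfin : Q.body.IsFinite)
    (𝒞 : Set (TCS σ))
    (hCsafe : ∀ C ∈ 𝒞, C.safe) (hCfin : ∀ C ∈ 𝒞, C.isFinite) :
    (∀ 𝒟 : IncDB σ, (∀ C ∈ 𝒞, C.sats 𝒟) → 𝒟.complS Q) ↔
      ∀ D : DB σ, D.Finite → Q.evalS D ⊆ unfoldEvalS Q 𝒞 D := by
  constructor
  · intro hent D hDfin t ht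
    obtain ⟨v, hv, hout⟩ := ht
    have hsub : TSet 𝒞 D ⊆ D := by
      rintro f hf
      simp only [TSet, Set.mem_iUnion, TCS.T, Set.mem_setOf_eq] at hf
      obtain ⟨C, hC, w, hw1, hw2, rfl⟩ := hf
      exact hw1
    let 𝒟 : IncDB σ := ⟨D, TSet 𝒞 D, hsub, hDfin⟩
    have hsats : ∀ C ∈ 𝒞, C.sats 𝒟 := by
      intro C hC w hw1 hw2
      have : C.stmt.headFact w ∈ C.T D := ⟨w, hw1, hw2, rfl⟩
      exact Set.mem_biUnion hC this
    have hcompl := hent 𝒟 hsats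
    have ht' : t ∈ Q.evalS (TSet 𝒞 D) := by
      have : t ∈ Q.evalS 𝒟.avail := by
        rw [hcompl]; exact ⟨v, hv, hout⟩
      exact this
    obtain ⟨v', hv', hout'⟩ := ht'
    refine ⟨v', ⟨hv'.2, ?_⟩, hout'⟩
    intro A hA
    have hmem : A.inst v' ∈ TSet 𝒞 D := hv'.1 A hA
    refine ⟨hsub hmem, ?_⟩
    simp only [TSet, Set.mem_iUnion, TCS.T, Set.mem_setOf_eq] at hmem
    obtain ⟨C, hC, w, hw1, hw2, heq⟩ := hmem
    exact ⟨C, hC, w, hw2, heq.symm⟩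
  · intro hcont 𝒟 hsats
    apply Set.Subset.antisymm
    · rintro t ⟨v, ⟨hr, hc⟩, hout⟩
      exact ⟨v, ⟨fun A hA => 𝒟.sub (hr A hA), hc⟩, hout⟩
    · rintro t ht
      obtain ⟨v, ⟨hc, hr⟩, hout⟩ := hcont 𝒟.ideal 𝒟.fin ht
      refine ⟨v, ⟨?_, hc⟩, hout⟩
      intro A hA
      obtain ⟨hAin, C, hC, w, hwsat, heq⟩ := hr A hA
      have := hsats C hC w (heq.symm ▸ hAin) hwsat
      exact heq ▸ this
end

section
/- Let R be a binary relation symbol and consider the path queries P2(x, y) :- R(x, z), R(z, y) and P3(x, y) :- R(x, z), R(z, w), R(w, y). Then: (a) Compl^s(P2) entails Compl^s(P3), i.e., every incomplete database (D̂, Ď) with P2^s(Ď) = P2^s(D̂) satisfies P3^s(Ď) = P3^s(D̂); and (b) P2 does not determine P3 under set semantics: there exist instances D1, D2 with P2^s(D1) = P2^s(D2) but P3^s(D1) ≠ P3^s(D2) (for example D1 = {R(1,2), R(2,3), R(3,4)} and D2 = {R(1,5), R(5,3), R(2,6), R(6,4)} for pairwise distinct constants 1, …, 6). -/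
/-- The binary atom `R(a, b)` (for a relation symbol `R` of arity 2). -/
def binAtom (σ : Sig) (R : σ.Rel) {V : Type} (a b : Term V) : RAtom σ V :=
  ⟨R, fun i => if i.val = 0 then a else b⟩

/-- The path query `P₂(x, y) :- R(x, z), R(z, y)` (variables `0 = x`, `1 = y`, `2 = z`). -/
def P2 (σ : Sig) (R : σ.Rel) : CQ σ 2 where
  nvars := 3
  head := fun i => if i.val = 0 then Term.var 0 else Term.var 1
  body := ⟨{binAtom σ R (Term.var 0) (Term.var 2),
            binAtom σ R (Term.var 2) (Term.var 1)}, ∅⟩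

/-- The path query `P₃(x, y) :- R(x, z), R(z, w), R(w, y)`
(variables `0 = x`, `1 = y`, `2 = z`, `3 = w`). -/
def P3 (σ : Sig) (R : σ.Rel) : CQ σ 2 where
  nvars := 4
  head := fun i => if i.val = 0 then Term.var 0 else Term.var 1
  body := ⟨{binAtom σ R (Term.var 0) (Term.var 2),
            binAtom σ R (Term.var 2) (Term.var 3),
            binAtom σ R (Term.var 3) (Term.var 1)}, ∅⟩

section Aux

variable {σ : Sig} {R : σ.Rel}

/-- The binary fact `R(a,b)`. -/
def Fct (σ : Sig) (R : σ.Rel) (a b : ℚ) : DFact σ :=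
  ⟨R, fun i => if i.val = 0 then a else b⟩

lemma inst_binAtom {V : Type} (t₁ t₂ : Term V) (v : V → ℚ) :
    (binAtom σ R t₁ t₂).inst v = Fct σ R (t₁.eval v) (t₂.eval v) := by
  unfold RAtom.inst Fct
  congr 1
  funext i
  by_cases h : i.val = 0 <;> simp [binAtom, h]

lemma Fct_inj (harr : σ.arity R = 2) {a b c d : ℚ}
    (h : Fct σ R a b = Fct σ R c d) : a = c ∧ b = d := by
  have h' : (fun i : Fin (σ.arity R) => if i.val = 0 then a else b)
      = fun i => if i.val = 0 then c else d := by
    have := (DFact.mk.injEq R _ R _).mp h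
    exact eq_of_heq this.2
  constructor
  · have := congrFun h' ⟨0, by omega⟩
    simpa using this
  · have := congrFun h' ⟨1, by omega⟩
    simpa using this

lemma mem_P2_iff (D : DB σ) (t : Fin 2 → ℚ) :
    t ∈ (P2 σ R).evalS D ↔ ∃ z, Fct σ R (t 0) z ∈ D ∧ Fct σ R z (t 1) ∈ D := by
  constructor
  · rintro ⟨v, ⟨hr, -⟩, hout⟩
    have h1 := hr _ (Set.mem_insert _ _)
    have h2 := hr _ (Set.mem_insert_of_mem _ rfl)
    erw [inst_binAtom] at h1 h2
    have ht0 : t 0 = v (0 : Fin 3) := by rw [← hout]; rfl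
    have ht1 : t 1 = v (1 : Fin 3) := by rw [← hout]; rfl
    exact ⟨v (2 : Fin 3), by rw [ht0]; exact h1, by rw [ht1]; exact h2⟩
  · rintro ⟨z, h1, h2⟩
    refine ⟨![t 0, t 1, z], ⟨?_, fun c hc => hc.elim⟩, ?_⟩
    · rintro A (rfl | rfl)
      · erw [inst_binAtom]; exact h1
      · erw [inst_binAtom]; exact h2
    · funext i
      fin_cases i <;> rfl

lemma mem_P3_iff (D : DB σ) (t : Fin 2 → ℚ) :
    t ∈ (P3 σ R).evalS D ↔
      ∃ z w, Fct σ R (t 0) z ∈ D ∧ Fct σ R z w ∈ D ∧ Fct σ R w (t 1) ∈ D := by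
  constructor
  · rintro ⟨v, ⟨hr, -⟩, hout⟩
    have h1 := hr _ (Set.mem_insert _ _)
    have h2 := hr _ (Set.mem_insert_of_mem _ (Set.mem_insert _ _))
    have h3 := hr _ (Set.mem_insert_of_mem _ (Set.mem_insert_of_mem _ rfl))
    erw [inst_binAtom] at h1 h2 h3
    have ht0 : t 0 = v (0 : Fin 4) := by rw [← hout]; rfl
    have ht1 : t 1 = v (1 : Fin 4) := by rw [← hout]; rfl
    exact ⟨v (2 : Fin 4), v (3 : Fin 4), by rw [ht0]; exact h1, h2, by rw [ht1]; exact h3⟩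
  · rintro ⟨z, w, h1, h2, h3⟩
    refine ⟨![t 0, t 1, z, w], ⟨?_, fun c hc => hc.elim⟩, ?_⟩
    · rintro A (rfl | rfl | rfl)
      · erw [inst_binAtom]; exact h1
      · erw [inst_binAtom]; exact h2
      · erw [inst_binAtom]; exact h3
    · funext i
      fin_cases i <;> rfl

end Aux

/-- (a) `Compl^s(P₂)` entails `Compl^s(P₃)`;
(b) `P₂` does not determine `P₃` under set semantics: there are instances `D₁, D₂`
with `P₂^s(D₁) = P₂^s(D₂)` but `P₃^s(D₁) ≠ P₃^s(D₂)`. -/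
theorem p2_completeness_entails_p3_but_no_determinacy
    (σ : Sig) (R : σ.Rel) (harr : σ.arity R = 2) :
    (∀ 𝒟 : IncDB σ, 𝒟.complS (P2 σ R) → 𝒟.complS (P3 σ R)) ∧
    (∃ D₁ D₂ : DB σ, D₁.Finite ∧ D₂.Finite ∧
      (P2 σ R).evalS D₁ = (P2 σ R).evalS D₂ ∧
      (P3 σ R).evalS D₁ ≠ (P3 σ R).evalS D₂) := by
  constructor
  · -- (a) entailment
    intro 𝒟 h2'
    have h2 : (P2 σ R).evalS 𝒟.avail = (P2 σ R).evalS 𝒟.ideal := h2'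
    have hsub := 𝒟.sub
    apply Set.Subset.antisymm
    · intro t ht
      rw [mem_P3_iff] at ht ⊢
      obtain ⟨z, w, h1, h2', h3⟩ := ht
      exact ⟨z, w, hsub h1, hsub h2', hsub h3⟩
    · intro t ht
      rw [mem_P3_iff] at ht ⊢
      obtain ⟨z, w, h1, h2', h3⟩ := ht
      -- (t 0, w) ∈ P2(ideal) = P2(avail)
      have haw : (![t 0, w] : Fin 2 → ℚ) ∈ (P2 σ R).evalS 𝒟.avail := by
        rw [h2, mem_P2_iff]
        exact ⟨z, by simpa using h1, by simpa using h2'⟩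
      rw [mem_P2_iff] at haw
      obtain ⟨u, hu1, hu2⟩ := haw
      simp only [Matrix.cons_val_zero, Matrix.cons_val_one, Matrix.head_cons] at hu1 hu2
      -- (u, t 1) ∈ P2(ideal) = P2(avail)
      have hub : (![u, t 1] : Fin 2 → ℚ) ∈ (P2 σ R).evalS 𝒟.avail := by
        rw [h2, mem_P2_iff]
        exact ⟨w, by simpa using hsub hu2, by simpa using h3⟩
      rw [mem_P2_iff] at hub
      obtain ⟨p, hp1, hp2⟩ := hub
      simp only [Matrix.cons_val_zero, Matrix.cons_val_one, Matrix.head_cons] at hp1 hp2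
      exact ⟨u, p, hu1, hp1, hp2⟩
  · -- (b) non-determinacy
    refine ⟨{Fct σ R 1 2, Fct σ R 2 3, Fct σ R 3 4},
      {Fct σ R 1 5, Fct σ R 5 3, Fct σ R 2 6, Fct σ R 6 4}, ?_, ?_, ?_, ?_⟩
    · exact (Set.finite_singleton _).insert _ |>.insert _
    · exact ((Set.finite_singleton _).insert _ |>.insert _).insert _
    · -- P2 answers coincide
      have memD1 : ∀ a b : ℚ, Fct σ R a b ∈
          ({Fct σ R 1 2, Fct σ R 2 3, Fct σ R 3 4} : DB σ) ↔
          (a = 1 ∧ b = 2) ∨ (a = 2 ∧ b = 3) ∨ (a = 3 ∧ b = 4) := by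
        intro a b
        simp only [Set.mem_insert_iff, Set.mem_singleton_iff]
        constructor
        · rintro (h | h | h)
          · exact Or.inl (Fct_inj harr h)
          · exact Or.inr (Or.inl (Fct_inj harr h))
          · exact Or.inr (Or.inr (Fct_inj harr h))
        · rintro (⟨rfl, rfl⟩ | ⟨rfl, rfl⟩ | ⟨rfl, rfl⟩) <;> simp
      have memD2 : ∀ a b : ℚ, Fct σ R a b ∈
          ({Fct σ R 1 5, Fct σ R 5 3, Fct σ R 2 6, Fct σ R 6 4} : DB σ) ↔
          (a = 1 ∧ b = 5) ∨ (a = 5 ∧ b = 3) ∨ (a = 2 ∧ b = 6) ∨ (a = 6 ∧ b = 4) := by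
        intro a b
        simp only [Set.mem_insert_iff, Set.mem_singleton_iff]
        constructor
        · rintro (h | h | h | h)
          · exact Or.inl (Fct_inj harr h)
          · exact Or.inr (Or.inl (Fct_inj harr h))
          · exact Or.inr (Or.inr (Or.inl (Fct_inj harr h)))
          · exact Or.inr (Or.inr (Or.inr (Fct_inj harr h)))
        · rintro (⟨rfl, rfl⟩ | ⟨rfl, rfl⟩ | ⟨rfl, rfl⟩ | ⟨rfl, rfl⟩) <;> simp
      ext t
      rw [mem_P2_iff, mem_P2_iff]
      constructor
      · rintro ⟨z, h1, h2⟩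
        rw [memD1] at h1 h2
        rcases h1 with ⟨ht, rfl⟩ | ⟨ht, rfl⟩ | ⟨ht, rfl⟩ <;>
          rcases h2 with ⟨hz, ht'⟩ | ⟨hz, ht'⟩ | ⟨hz, ht'⟩ <;>
          first
            | (norm_num at hz; done)
            | ((refine ⟨5, ?_, ?_⟩ <;> rw [memD2] <;> norm_num [ht, ht']); done)
            | ((refine ⟨6, ?_, ?_⟩ <;> rw [memD2] <;> norm_num [ht, ht']); done)
      · rintro ⟨z, h1, h2⟩
        rw [memD2] at h1 h2
        rcases h1 with ⟨ht, rfl⟩ | ⟨ht, rfl⟩ | ⟨ht, rfl⟩ | ⟨ht, rfl⟩ <;>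
          rcases h2 with ⟨hz, ht'⟩ | ⟨hz, ht'⟩ | ⟨hz, ht'⟩ | ⟨hz, ht'⟩ <;>
          first
            | (norm_num at hz; done)
            | ((refine ⟨2, ?_, ?_⟩ <;> rw [memD1] <;> norm_num [ht, ht']); done)
            | ((refine ⟨3, ?_, ?_⟩ <;> rw [memD1] <;> norm_num [ht, ht']); done)
    · -- P3 answers differ
      intro h
      have h14 : (![1, 4] : Fin 2 → ℚ) ∈
          (P3 σ R).evalS {Fct σ R 1 2, Fct σ R 2 3, Fct σ R 3 4} := by
        rw [mem_P3_iff]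
        refine ⟨2, 3, ?_, ?_, ?_⟩ <;> simp
      rw [h, mem_P3_iff] at h14
      obtain ⟨z, w, h1, h2, h3⟩ := h14
      simp only [Matrix.cons_val_zero, Matrix.cons_val_one, Matrix.head_cons,
        Set.mem_insert_iff, Set.mem_singleton_iff] at h1 h2 h3
      rcases h1 with h1 | h1 | h1 | h1 <;>
        [skip; exact absurd (Fct_inj harr h1).1 (by norm_num);
         exact absurd (Fct_inj harr h1).1 (by norm_num);
         exact absurd (Fct_inj harr h1).1 (by norm_num)]
      obtain ⟨-, rfl⟩ := Fct_inj harr h1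
      rcases h2 with h2 | h2 | h2 | h2 <;>
        [exact absurd (Fct_inj harr h2).1 (by norm_num); skip;
         exact absurd (Fct_inj harr h2).1 (by norm_num);
         exact absurd (Fct_inj harr h2).1 (by norm_num)]
      obtain ⟨-, rfl⟩ := Fct_inj harr h2
      rcases h3 with h3 | h3 | h3 | h3 <;>
        exact absurd (Fct_inj harr h3) (by norm_num)
end

section
/- For conjunctive queries Q1, …, Qn and Q: the set of statements {Compl^b(Q1), …, Compl^b(Qn)} entails Compl^b(Q) if and only if the union of canonical statement sets 𝒞_{Q1} ∪ … ∪ 𝒞_{Qn} entails every canonical completeness statement in 𝒞_Q. -/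
lemma sat_finite {σ : Sig} {k : ℕ} (Q : CQ σ k) (hsafe : Q.safe) (D : DB σ) (hD : D.Finite) :
    {v : Fin Q.nvars → ℚ | Q.body.sat v D}.Finite := by
  have hV : (⋃ f ∈ D, Set.range f.args).Finite :=
    hD.biUnion fun f _ => Set.finite_range f.args
  apply Set.Finite.subset (Set.Finite.pi fun _ : Fin Q.nvars => hV)
  intro v hv
  intro x _
  obtain ⟨A, hA, i, hAi⟩ := hsafe x
  have hf : A.inst v ∈ D := hv.1 A hA
  refine Set.mem_biUnion hf ⟨i, ?_⟩
  show (A.args i).eval v = v x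
  rw [hAi]; rfl

lemma complB_iff_canonSat {σ : Sig} {k : ℕ} (Q : CQ σ k) (hsafe : Q.safe)
    (𝒟 : IncDB σ) : 𝒟.complB Q ↔ Q.canonSat 𝒟 := by
  constructor
  · intro h A hA v hv
    set t := Q.out v with ht
    have hsub : {w : Fin Q.nvars → ℚ | Q.body.sat w 𝒟.avail ∧ Q.out w = t}
        ⊆ {w | Q.body.sat w 𝒟.ideal ∧ Q.out w = t} := by
      intro w hw
      exact ⟨⟨fun B hB => 𝒟.sub (hw.1.1 B hB), hw.1.2⟩, hw.2⟩
    have hfin : {w : Fin Q.nvars → ℚ | Q.body.sat w 𝒟.ideal ∧ Q.out w = t}.Finite :=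
      (sat_finite Q hsafe 𝒟.ideal 𝒟.fin).subset fun w hw => hw.1
    have heq := Set.eq_of_subset_of_ncard_le hsub (le_of_eq (h t).symm) hfin
    have hv' : v ∈ {w : Fin Q.nvars → ℚ | Q.body.sat w 𝒟.avail ∧ Q.out w = t} := by
      rw [heq]; exact ⟨hv, rfl⟩
    exact hv'.1.1 A hA
  · intro h t
    unfold CQ.mult
    congr 1
    ext w
    constructor
    · rintro ⟨hw, hout⟩
      exact ⟨⟨fun B hB => 𝒟.sub (hw.1 B hB), hw.2⟩, hout⟩
    · rintro ⟨hw, hout⟩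
      exact ⟨⟨fun B hB => h B hB w hw, hw.2⟩, hout⟩

/-- `{Compl^b(Q₁), …, Compl^b(Qₙ)} ⊨ Compl^b(Q)` iff
`𝒞_{Q₁} ∪ … ∪ 𝒞_{Qₙ}` entails every canonical completeness statement in `𝒞_Q`. -/
theorem qcqc_bag_entailment_iff_canonical_entailment
    (σ : Sig) (n : ℕ) (ks : Fin n → ℕ) (Qs : (i : Fin n) → CQ σ (ks i))
    (k : ℕ) (Q : CQ σ k)
    (hQsafe : Q.safe) (hQfin : Q.body.IsFinite)
    (hQssafe : ∀ i, (Qs i).safe) (hQsfin : ∀ i, (Qs i).body.IsFinite) :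
    (∀ 𝒟 : IncDB σ, (∀ i, 𝒟.complB (Qs i)) → 𝒟.complB Q) ↔
      (∀ 𝒟 : IncDB σ, (∀ i, (Qs i).canonSat 𝒟) → Q.canonSat 𝒟) := by
  constructor
  · intro h 𝒟 hc
    exact (complB_iff_canonSat Q hQsafe 𝒟).mp
      (h 𝒟 fun i => (complB_iff_canonSat (Qs i) (hQssafe i) 𝒟).mpr (hc i))
  · intro h 𝒟 hc
    exact (complB_iff_canonSat Q hQsafe 𝒟).mpr
      (h 𝒟 fun i => (complB_iff_canonSat (Qs i) (hQssafe i) 𝒟).mp (hc i))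
end

section
/- Let Q^count be a count-query with core conjunctive query Q and let 𝒞 be a set of TC statements. Then 𝒞 entails Compl(Q^count) if and only if 𝒞 entails every canonical completeness statement in 𝒞_Q. -/
/-- The answer of the count-query `Q^count` over `D`: pairs of an answer tuple of the
core `Q` and its multiplicity in `Q^b(D)`. -/
def CQ.countEval {σ : Sig} {k : ℕ} (Q : CQ σ k) (D : DB σ) : Set ((Fin k → ℚ) × ℕ) :=
  { p | p.1 ∈ Q.evalS D ∧ p.2 = Q.mult D p.1 }

/-- `𝒟 ⊨ Compl(Q^count)`. -/
def IncDB.complCount {σ : Sig} {k : ℕ} (𝒟 : IncDB σ) (Q : CQ σ k) : Prop :=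
  Q.countEval 𝒟.avail = Q.countEval 𝒟.ideal


lemma CQ.satSet_finite {σ : Sig} {k : ℕ} (Q : CQ σ k) (hsafe : Q.safe)
    {D : DB σ} (hD : D.Finite) (t : Fin k → ℚ) :
    {v : Fin Q.nvars → ℚ | Q.body.sat v D ∧ Q.out v = t}.Finite := by
  have hV : (⋃ f ∈ D, Set.range f.args).Finite :=
    hD.biUnion (fun f _ => Set.finite_range _)
  apply (Set.Finite.pi (fun _ : Fin Q.nvars => hV)).subset
  intro v ⟨hv, _⟩ x _
  obtain ⟨A, hA, i, hi⟩ := hsafe x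
  have hmem : A.inst v ∈ D := hv.1 A hA
  have : v x = (A.inst v).args i := by
    simp [RAtom.inst, hi, Term.eval]
  rw [this]
  exact Set.mem_biUnion hmem ⟨i, rfl⟩

lemma complCount_iff_canonSat {σ : Sig} {k : ℕ} (Q : CQ σ k)
    (hsafe : Q.safe) (𝒟 : IncDB σ) :
    𝒟.complCount Q ↔ Q.canonSat 𝒟 := by
  constructor
  · intro h A hA v hv
    set t := Q.out v with ht
    have hSfin := Q.satSet_finite hsafe 𝒟.fin t
    have hsub : {w : Fin Q.nvars → ℚ | Q.body.sat w 𝒟.avail ∧ Q.out w = t} ⊆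
        {w : Fin Q.nvars → ℚ | Q.body.sat w 𝒟.ideal ∧ Q.out w = t} :=
      fun w ⟨hw, hw2⟩ => ⟨Condition.sat_mono 𝒟.sub hw, hw2⟩
    have hmemI : (t, Q.mult 𝒟.ideal t) ∈ Q.countEval 𝒟.ideal :=
      ⟨⟨v, hv, rfl⟩, rfl⟩
    rw [← h] at hmemI
    obtain ⟨_, hmult⟩ := hmemI
    have heq : {w : Fin Q.nvars → ℚ | Q.body.sat w 𝒟.avail ∧ Q.out w = t} =
        {w : Fin Q.nvars → ℚ | Q.body.sat w 𝒟.ideal ∧ Q.out w = t} := by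
      apply Set.eq_of_subset_of_ncard_le hsub _ hSfin
      exact le_of_eq hmult
    have hvA : v ∈ {w : Fin Q.nvars → ℚ | Q.body.sat w 𝒟.avail ∧ Q.out w = t} := by
      rw [heq]; exact ⟨hv, rfl⟩
    exact hvA.1.1 A hA
  · intro h
    have hset : ∀ t, {w : Fin Q.nvars → ℚ | Q.body.sat w 𝒟.avail ∧ Q.out w = t} =
        {w : Fin Q.nvars → ℚ | Q.body.sat w 𝒟.ideal ∧ Q.out w = t} := by
      intro t
      ext w
      constructor
      · exact fun ⟨hw, hw2⟩ => ⟨Condition.sat_mono 𝒟.sub hw, hw2⟩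
      · rintro ⟨hw, hw2⟩
        exact ⟨⟨fun A hA => h A hA w hw, hw.2⟩, hw2⟩
    unfold IncDB.complCount CQ.countEval CQ.evalS CQ.mult
    ext ⟨t, n⟩
    simp only [Set.mem_setOf_eq, hset]
    constructor
    · rintro ⟨⟨v, hv⟩, hn⟩
      exact ⟨⟨v, (Set.ext_iff.mp (hset t) v).mp hv⟩, hn⟩
    · rintro ⟨⟨v, hv⟩, hn⟩
      exact ⟨⟨v, (Set.ext_iff.mp (hset t) v).mpr hv⟩, hn⟩

/-- `𝒞 ⊨ Compl(Q^count)` iff `𝒞` entails every canonical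
completeness statement in `𝒞_Q`. -/
theorem count_query_completeness_iff_canonical
    (σ : Sig) (k : ℕ) (Q : CQ σ k)
    (hsafe : Q.safe) (hfin : Q.body.IsFinite)
    (𝒞 : Set (TCS σ))
    (hCsafe : ∀ C ∈ 𝒞, C.safe) (hCfin : ∀ C ∈ 𝒞, C.isFinite) :
    (∀ 𝒟 : IncDB σ, (∀ C ∈ 𝒞, C.sats 𝒟) → 𝒟.complCount Q) ↔
      (∀ 𝒟 : IncDB σ, (∀ C ∈ 𝒞, C.sats 𝒟) → Q.canonSat 𝒟) := by
  constructor
  · intro h 𝒟 h𝒟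
    exact (complCount_iff_canonSat Q hsafe 𝒟).mp (h 𝒟 h𝒟)
  · intro h 𝒟 h𝒟
    exact (complCount_iff_canonSat Q hsafe 𝒟).mpr (h 𝒟 h𝒟)
end

section
/- Let 𝒞 be a set of completeness statements over RDF graphs and let Q = (W, P) be a basic SPARQL query (P a basic graph pattern, W ⊆ Var(P)). Then 𝒞 ⊨ Compl(Q) — i.e., every incomplete data source (G^a, G^i) satisfying all statements of 𝒞 satisfies ⟦Q⟧_{G^a} = ⟦Q⟧_{G^i} as bags — if and only if P̃ = T_𝒞(P̃), where P̃ is the frozen graph of P. -/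
/-!
Framework for completeness statements over RDF graphs and basic SPARQL queries
(Darari, Nutt, Pirrò, Razniewski, ISWC 2013).  `I`, `L`, `V` are the pairwise
disjoint sets of IRIs, literals and variables.
-/

/-- An RDF triple `(s, p, o) ∈ I × I × (I ∪ L)`. -/
structure Triple (I L : Type) where
  s : I
  p : I
  o : I ⊕ L

/-- An RDF graph: a set of triples (graphs are the finite ones). -/
abbrev RDFGraph (I L : Type) := Set (Triple I L)

/-- A triple pattern: each position may also hold a variable. -/
structure TP (I L V : Type) where
  s : I ⊕ V
  p : I ⊕ V
  o : (I ⊕ L) ⊕ V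

/-- A basic graph pattern (BGP): a set of triple patterns. -/
abbrev BGP (I L V : Type) := Set (TP I L V)

/-- A mapping `μ` matches an IRI position of a pattern against an IRI. -/
def posMatchI {I L V : Type} (μ : V → I ⊕ L) : I ⊕ V → I → Prop
  | .inl i, a => a = i
  | .inr x, a => μ x = Sum.inl a

/-- A mapping `μ` matches the object position of a pattern against a term. -/
def posMatchO {I L V : Type} (μ : V → I ⊕ L) : (I ⊕ L) ⊕ V → I ⊕ L → Prop
  | .inl t, a => a = t
  | .inr x, a => μ x = a

/-- `μ` instantiates the triple pattern `t` to the triple `tr`. -/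
def TP.matches {I L V : Type} (t : TP I L V) (μ : V → I ⊕ L) (tr : Triple I L) : Prop :=
  posMatchI μ t.s tr.s ∧ posMatchI μ t.p tr.p ∧ posMatchO μ t.o tr.o

/-- `μ ∈ ⟦P⟧_G`: every triple pattern of `P` is instantiated by `μ` to a triple of `G`. -/
def BGP.satBy {I L V : Type} (P : BGP I L V) (μ : V → I ⊕ L) (G : RDFGraph I L) : Prop :=
  ∀ t ∈ P, ∃ tr ∈ G, t.matches μ tr

/-- The variables of a triple pattern. -/
def TP.vars {I L V : Type} (t : TP I L V) : Set V :=
  { x | t.s = Sum.inr x ∨ t.p = Sum.inr x ∨ t.o = Sum.inr x }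

/-- The variables of a BGP. -/
def BGP.vars {I L V : Type} (P : BGP I L V) : Set V :=
  ⋃ t ∈ P, t.vars

/-- The multiplicity, in the bag `⟦(W, P)⟧_G`, of the answer mapping represented by
`a` (restricted to `W`): the number of mappings `μ` with domain `Var(P)` that
satisfy `P` over `G` and agree with `a` on `W` (mappings with domain `Var(P)` are
represented as total functions that are pinned to `a` outside `Var(P)`). -/
noncomputable def multQ {I L V : Type} (W : Set V) (P : BGP I L V) (G : RDFGraph I L)
    (a : V → I ⊕ L) : ℕ :=
  Set.ncard { μ : V → I ⊕ L | BGP.satBy P μ G ∧ (∀ x ∈ W, μ x = a x) ∧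
    ∀ x, x ∉ BGP.vars P → μ x = a x }

/-- A completeness statement `Compl(P₁ | P₂)`: pattern `P₁`, condition `P₂`. -/
structure CStmt (I L V : Type) where
  patt : BGP I L V
  cond : BGP I L V

/-- The answer of the associated CONSTRUCT query:
`Q_C(G) = ⋃ { μ P₁ : μ ∈ ⟦P₁ ∪ P₂⟧_G }`. -/
def CStmt.constructEval {I L V : Type} (C : CStmt I L V) (G : RDFGraph I L) : RDFGraph I L :=
  { tr | ∃ μ : V → I ⊕ L, BGP.satBy (C.patt ∪ C.cond) μ G ∧
    ∃ t ∈ C.patt, TP.matches t μ tr }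

/-- An incomplete data source `𝒢 = (G^a, G^i)` with `G^a ⊆ G^i`, `G^i` finite. -/
structure IncSrc (I L : Type) where
  avail : RDFGraph I L
  ideal : RDFGraph I L
  sub : avail ⊆ ideal
  fin : ideal.Finite

/-- `𝒢 ⊨ C`: `Q_C(G^i) ⊆ G^a`. -/
def CStmt.sats {I L V : Type} (C : CStmt I L V) (𝒢 : IncSrc I L) : Prop :=
  C.constructEval 𝒢.ideal ⊆ 𝒢.avail

/-- `T_𝒞(G) = ⋃_{C ∈ 𝒞} Q_C(G)`. -/
def TSetG {I L V : Type} (𝒞 : Set (CStmt I L V)) (G : RDFGraph I L) : RDFGraph I L :=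
  ⋃ C ∈ 𝒞, C.constructEval G

/-- Freezing an IRI-or-variable position with the freeze map `φ`. -/
def freezePosI {I V : Type} (φ : V → I) : I ⊕ V → I
  | .inl i => i
  | .inr x => φ x

/-- Freezing an object position with the freeze map `φ`. -/
def freezePosO {I L V : Type} (φ : V → I) : (I ⊕ L) ⊕ V → I ⊕ L
  | .inl a => a
  | .inr x => Sum.inl (φ x)

/-- The frozen triple of a triple pattern. -/
def TP.freeze {I L V : Type} (φ : V → I) (t : TP I L V) : Triple I L :=
  ⟨freezePosI φ t.s, freezePosI φ t.p, freezePosO φ t.o⟩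

/-- The frozen graph `P̃` of a BGP `P`. -/
def BGP.freeze {I L V : Type} (φ : V → I) (P : BGP I L V) : RDFGraph I L :=
  (TP.freeze φ) '' P

/-- The IRIs occurring in a triple pattern. -/
def TP.iris {I L V : Type} (t : TP I L V) : Set I :=
  { i | t.s = Sum.inl i ∨ t.p = Sum.inl i ∨ t.o = Sum.inl (Sum.inl i) }

/-- The IRIs occurring in a BGP. -/
def BGP.iris {I L V : Type} (P : BGP I L V) : Set I :=
  ⋃ t ∈ P, t.iris

/-- The IRIs occurring in a completeness statement. -/
def CStmt.iris {I L V : Type} (C : CStmt I L V) : Set I :=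
  BGP.iris C.patt ∪ BGP.iris C.cond


/-! ### Auxiliary lemmas -/

lemma posMatchI_unique {I L V : Type} (μ : V → I ⊕ L) (p : I ⊕ V) {a b : I}
    (ha : posMatchI μ p a) (hb : posMatchI μ p b) : a = b := by
  cases p with
  | inl i => simp only [posMatchI] at ha hb; rw [ha, hb]
  | inr x => simp only [posMatchI] at ha hb; exact Sum.inl.inj (ha ▸ hb)

lemma posMatchO_unique {I L V : Type} (μ : V → I ⊕ L) (p : (I ⊕ L) ⊕ V) {a b : I ⊕ L}
    (ha : posMatchO μ p a) (hb : posMatchO μ p b) : a = b := by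
  cases p with
  | inl t => simp only [posMatchO] at ha hb; rw [ha, hb]
  | inr x => simp only [posMatchO] at ha hb; rw [← ha, ← hb]

lemma matches_unique {I L V : Type} {t : TP I L V} {μ : V → I ⊕ L} {tr tr' : Triple I L}
    (h : t.matches μ tr) (h' : t.matches μ tr') : tr = tr' := by
  obtain ⟨hs, hp, ho⟩ := h
  obtain ⟨hs', hp', ho'⟩ := h'
  cases tr; cases tr'
  simp only [Triple.mk.injEq]
  exact ⟨posMatchI_unique μ t.s hs hs', posMatchI_unique μ t.p hp hp',
    posMatchO_unique μ t.o ho ho'⟩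

lemma freeze_matches {I L V : Type} (φ : V → I) (t : TP I L V) :
    t.matches (fun x => Sum.inl (φ x)) (t.freeze φ) := by
  refine ⟨?_, ?_, ?_⟩
  · cases h : t.s <;> simp [TP.freeze, posMatchI, freezePosI, h]
  · cases h : t.p <;> simp [TP.freeze, posMatchI, freezePosI, h]
  · cases h : t.o <;> simp [TP.freeze, posMatchO, freezePosO, h]

open Classical in
/-- Unfreezing a term: a frozen IRI `φ x` is sent back to `μ x`; other terms are fixed. -/
noncomputable def defrost {I L V : Type} (φ : V → I) (μ : V → I ⊕ L) : I ⊕ L → I ⊕ L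
  | .inl i => if h : ∃ x, φ x = i then μ h.choose else .inl i
  | .inr l => .inr l

lemma defrost_frozen {I L V : Type} {φ : V → I} (hinj : Function.Injective φ)
    (μ : V → I ⊕ L) (x : V) : defrost φ μ (Sum.inl (φ x)) = μ x := by
  have h : ∃ y, φ y = φ x := ⟨x, rfl⟩
  simp only [defrost, dif_pos h]
  rw [hinj h.choose_spec]

lemma defrost_other {I L V : Type} (φ : V → I) (μ : V → I ⊕ L) {i : I}
    (h : ∀ x, φ x ≠ i) : defrost φ μ (Sum.inl i) = Sum.inl i := by
  rw [defrost, dif_neg (by rintro ⟨x, hx⟩; exact h x hx)]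

lemma posI_transfer {I L V : Type} {φ : V → I} (hinj : Function.Injective φ)
    (μ ν : V → I ⊕ L) (sp tp : I ⊕ V) (b : I)
    (hs : ∀ i, sp = Sum.inl i → ∀ x, φ x ≠ i)
    (ht : ∀ j, tp = Sum.inl j → ∀ x, φ x ≠ j)
    (h1 : posMatchI ν sp (freezePosI φ tp))
    (h2 : posMatchI μ tp b) :
    posMatchI (fun y => defrost φ μ (ν y)) sp b := by
  cases sp with
  | inl i =>
    cases tp with
    | inl j =>
      simp only [posMatchI, freezePosI] at h1 h2 ⊢
      rw [h2, h1]
    | inr x =>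
      simp only [posMatchI, freezePosI] at h1
      exact absurd h1 (hs i rfl x)
  | inr y =>
    cases tp with
    | inl j =>
      simp only [posMatchI, freezePosI] at h1 h2 ⊢
      rw [h1, defrost_other φ μ (ht j rfl), h2]
    | inr x =>
      simp only [posMatchI, freezePosI] at h1 h2 ⊢
      rw [h1, defrost_frozen hinj, h2]

lemma posO_transfer {I L V : Type} {φ : V → I} (hinj : Function.Injective φ)
    (μ ν : V → I ⊕ L) (sp tp : (I ⊕ L) ⊕ V) (b : I ⊕ L)
    (hs : ∀ i, sp = Sum.inl (Sum.inl i) → ∀ x, φ x ≠ i)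
    (ht : ∀ j, tp = Sum.inl (Sum.inl j) → ∀ x, φ x ≠ j)
    (h1 : posMatchO ν sp (freezePosO φ tp))
    (h2 : posMatchO μ tp b) :
    posMatchO (fun y => defrost φ μ (ν y)) sp b := by
  cases sp with
  | inl a =>
    cases tp with
    | inl c =>
      simp only [posMatchO, freezePosO] at h1 h2 ⊢
      rw [h2, h1]
    | inr x =>
      simp only [posMatchO, freezePosO] at h1
      exact absurd rfl (hs (φ x) (by rw [h1]) x)
  | inr y =>
    cases tp with
    | inl c =>
      simp only [posMatchO, freezePosO] at h1 h2 ⊢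
      rw [h1, h2]
      cases c with
      | inl j => exact defrost_other φ μ (ht j rfl)
      | inr l => rfl
    | inr x =>
      simp only [posMatchO, freezePosO] at h1 h2 ⊢
      rw [h1, defrost_frozen hinj, h2]

lemma matches_transfer {I L V : Type} {φ : V → I} (hinj : Function.Injective φ)
    (μ ν : V → I ⊕ L) (s t : TP I L V) (tr : Triple I L)
    (hs : ∀ i ∈ s.iris, ∀ x, φ x ≠ i)
    (ht : ∀ j ∈ t.iris, ∀ x, φ x ≠ j)
    (h1 : s.matches ν (t.freeze φ))
    (h2 : t.matches μ tr) :
    s.matches (fun y => defrost φ μ (ν y)) tr := by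
  obtain ⟨h1s, h1p, h1o⟩ := h1
  obtain ⟨h2s, h2p, h2o⟩ := h2
  exact ⟨posI_transfer hinj μ ν s.s t.s tr.s
      (fun i hi => hs i (Or.inl hi)) (fun j hj => ht j (Or.inl hj)) h1s h2s,
    posI_transfer hinj μ ν s.p t.p tr.p
      (fun i hi => hs i (Or.inr (Or.inl hi))) (fun j hj => ht j (Or.inr (Or.inl hj))) h1p h2p,
    posO_transfer hinj μ ν s.o t.o tr.o
      (fun i hi => hs i (Or.inr (Or.inr hi))) (fun j hj => ht j (Or.inr (Or.inr hj))) h1o h2o⟩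

lemma constructEval_subset {I L V : Type} (C : CStmt I L V) (G : RDFGraph I L) :
    C.constructEval G ⊆ G := by
  rintro tr ⟨μ, hsat, t, ht, hm⟩
  obtain ⟨tr', htr', hm'⟩ := hsat t (Or.inl ht)
  rwa [matches_unique hm hm']

lemma TP.vars_finite {I L V : Type} (t : TP I L V) : (t.vars).Finite := by
  have : t.vars ⊆ {x | t.s = Sum.inr x} ∪ {x | t.p = Sum.inr x} ∪ {x | t.o = Sum.inr x} := by
    intro x hx
    rcases hx with h | h | h
    · exact Or.inl (Or.inl h)
    · exact Or.inl (Or.inr h)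
    · exact Or.inr h
  refine Set.Finite.subset ?_ this
  refine Set.Finite.union (Set.Finite.union ?_ ?_) ?_ <;>
    exact Set.Subsingleton.finite (fun a ha b hb => Sum.inr.inj (ha ▸ hb))

lemma sat_pinned_finite {I L V : Type} (P : BGP I L V) (hP : P.Finite)
    (G : RDFGraph I L) (hG : G.Finite) (a : V → I ⊕ L) :
    {μ : V → I ⊕ L | BGP.satBy P μ G ∧ ∀ x, x ∉ BGP.vars P → μ x = a x}.Finite := by
  classical
  set S := {μ : V → I ⊕ L | BGP.satBy P μ G ∧ ∀ x, x ∉ BGP.vars P → μ x = a x} with hS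
  set T : Set (I ⊕ L) :=
    (fun tr : Triple I L => (Sum.inl tr.s : I ⊕ L)) '' G ∪
    (fun tr : Triple I L => (Sum.inl tr.p : I ⊕ L)) '' G ∪
    (fun tr : Triple I L => tr.o) '' G with hT
  have hTfin : T.Finite := ((hG.image _).union (hG.image _)).union (hG.image _)
  have hVfin : (BGP.vars P).Finite := hP.biUnion (fun t _ => t.vars_finite)
  have key : ∀ μ ∈ S, ∀ x ∈ BGP.vars P, μ x ∈ T := by
    rintro μ ⟨hsat, _⟩ x hx
    rw [BGP.vars, Set.mem_iUnion₂] at hx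
    obtain ⟨t, ht, hxt⟩ := hx
    obtain ⟨tr, htr, hms, hmp, hmo⟩ := hsat t ht
    rcases hxt with h | h | h
    · rw [h] at hms
      exact Or.inl (Or.inl ⟨tr, htr, hms.symm⟩)
    · rw [h] at hmp
      exact Or.inl (Or.inr ⟨tr, htr, hmp.symm⟩)
    · rw [h] at hmo
      exact Or.inr ⟨tr, htr, hmo.symm⟩
  haveI := hVfin.to_subtype
  haveI := hTfin.to_subtype
  haveI : Finite S := by
    refine Finite.of_injective
      (fun μ : S => fun x : BGP.vars P => (⟨μ.1 x.1, key μ.1 μ.2 x.1 x.2⟩ : T)) ?_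
    rintro ⟨μ, hμ⟩ ⟨μ', hμ'⟩ h
    refine Subtype.ext (funext fun y => ?_)
    show μ y = μ' y
    by_cases hy : y ∈ BGP.vars P
    · have := congrFun h ⟨y, hy⟩
      simpa using this
    · rw [hμ.2 y hy, hμ'.2 y hy]
  exact S.toFinite

/-- For a set `𝒞` of completeness statements and a basic query
`Q = (W, P)`:  `𝒞 ⊨ Compl(Q)` — every incomplete data source satisfying `𝒞` returns
the same bag of answers to `Q` over the available and the ideal graph — iff
`P̃ = T_𝒞(P̃)`, where `P̃` is the frozen graph of `P` (each variable replaced by a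
distinct fresh IRI via `φ`). -/
theorem basic_query_completeness_iff_frozen_fixpoint
    (I L V : Type) (𝒞 : Set (CStmt I L V))
    (hCne : ∀ C ∈ 𝒞, C.patt.Nonempty)
    (hCfin : ∀ C ∈ 𝒞, C.patt.Finite ∧ C.cond.Finite)
    (P : BGP I L V) (hPfin : P.Finite)
    (W : Set V) (hW : W ⊆ BGP.vars P)
    (φ : V → I) (hφinj : Function.Injective φ)
    (hφfresh : ∀ x, φ x ∉ BGP.iris P ∪ ⋃ C ∈ 𝒞, CStmt.iris C) :
    (∀ 𝒢 : IncSrc I L, (∀ C ∈ 𝒞, C.sats 𝒢) →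
        ∀ a : V → I ⊕ L, multQ W P 𝒢.avail a = multQ W P 𝒢.ideal a) ↔
      BGP.freeze φ P = TSetG 𝒞 (BGP.freeze φ P) := by
  classical
  have hPfreeze : (BGP.freeze φ P).Finite := hPfin.image _
  have hfreshP : ∀ t ∈ P, ∀ j ∈ TP.iris t, ∀ x, φ x ≠ j := by
    intro t ht j hj x hx
    exact hφfresh x (Or.inl (Set.mem_biUnion ht (hx ▸ hj)))
  have hfreshC : ∀ C ∈ 𝒞, ∀ s ∈ C.patt ∪ C.cond, ∀ i ∈ TP.iris s, ∀ x, φ x ≠ i := by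
    intro C hC s hs i hi x hx
    refine hφfresh x (Or.inr (Set.mem_biUnion hC ?_))
    rcases hs with hs | hs
    · exact Or.inl (Set.mem_biUnion hs (hx ▸ hi))
    · exact Or.inr (Set.mem_biUnion hs (hx ▸ hi))
  have hsubT : TSetG 𝒞 (BGP.freeze φ P) ⊆ BGP.freeze φ P := by
    intro tr htr
    rw [TSetG, Set.mem_iUnion₂] at htr
    obtain ⟨C, hC, htr⟩ := htr
    exact constructEval_subset C _ htr
  constructor
  · -- completeness entailment implies the fixpoint
    intro hlhs
    refine Set.Subset.antisymm ?_ hsubT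
    by_contra hnot
    rw [Set.not_subset] at hnot
    obtain ⟨tr₀, htr₀, htr₀n⟩ := hnot
    obtain ⟨t₀, ht₀, rfl⟩ := htr₀
    set 𝒢 : IncSrc I L := ⟨TSetG 𝒞 (BGP.freeze φ P), BGP.freeze φ P, hsubT, hPfreeze⟩ with h𝒢
    have hsats : ∀ C ∈ 𝒞, C.sats 𝒢 := fun C hC tr htr => Set.mem_biUnion hC htr
    set a : V → I ⊕ L := fun x => Sum.inl (φ x) with ha
    have heq := hlhs 𝒢 hsats a
    rw [multQ, multQ] at heq
    set Sav := {μ : V → I ⊕ L | BGP.satBy P μ 𝒢.avail ∧ (∀ x ∈ W, μ x = a x) ∧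
      ∀ x, x ∉ BGP.vars P → μ x = a x} with hSav
    set Sid := {μ : V → I ⊕ L | BGP.satBy P μ 𝒢.ideal ∧ (∀ x ∈ W, μ x = a x) ∧
      ∀ x, x ∉ BGP.vars P → μ x = a x} with hSid
    have hsub : Sav ⊆ Sid := by
      rintro μ ⟨h1, h2, h3⟩
      refine ⟨fun t ht => ?_, h2, h3⟩
      obtain ⟨tr, htr, hm⟩ := h1 t ht
      exact ⟨tr, hsubT htr, hm⟩
    have hmem : a ∈ Sid := by
      refine ⟨fun t ht => ⟨t.freeze φ, Set.mem_image_of_mem _ ht, freeze_matches φ t⟩,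
        fun _ _ => rfl, fun _ _ => rfl⟩
    have hnotmem : a ∉ Sav := by
      rintro ⟨h1, _, _⟩
      obtain ⟨tr, htr, hm⟩ := h1 t₀ ht₀
      rw [matches_unique hm (freeze_matches φ t₀)] at htr
      exact htr₀n htr
    have hfin : Sid.Finite := by
      refine Set.Finite.subset (sat_pinned_finite P hPfin (BGP.freeze φ P) hPfreeze a) ?_
      rintro μ ⟨h1, _, h3⟩
      exact ⟨h1, h3⟩
    have hlt : Sav.ncard < Sid.ncard :=
      Set.ncard_lt_ncard ((Set.ssubset_iff_of_subset hsub).mpr ⟨a, hmem, hnotmem⟩) hfin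
    exact absurd heq (ne_of_lt hlt)
  · -- the fixpoint implies completeness entailment
    intro hfix 𝒢 hsats a
    have hsetseq : {μ : V → I ⊕ L | BGP.satBy P μ 𝒢.avail ∧ (∀ x ∈ W, μ x = a x) ∧
        ∀ x, x ∉ BGP.vars P → μ x = a x} =
        {μ : V → I ⊕ L | BGP.satBy P μ 𝒢.ideal ∧ (∀ x ∈ W, μ x = a x) ∧
        ∀ x, x ∉ BGP.vars P → μ x = a x} := by
      ext μ
      simp only [Set.mem_setOf_eq]
      constructor
      · rintro ⟨h1, h2, h3⟩
        refine ⟨fun t ht => ?_, h2, h3⟩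
        obtain ⟨tr, htr, hm⟩ := h1 t ht
        exact ⟨tr, 𝒢.sub htr, hm⟩
      · rintro ⟨h1, h2, h3⟩
        refine ⟨fun t ht => ?_, h2, h3⟩
        obtain ⟨tr, htr, hm⟩ := h1 t ht
        refine ⟨tr, ?_, hm⟩
        have hfz : t.freeze φ ∈ TSetG 𝒞 (BGP.freeze φ P) :=
          hfix ▸ Set.mem_image_of_mem _ ht
        rw [TSetG, Set.mem_iUnion₂] at hfz
        obtain ⟨C, hC, ν, hν, s, hsC, hsm⟩ := hfz
        apply hsats C hC
        refine ⟨fun y => defrost φ μ (ν y), ?_, s, hsC, ?_⟩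
        · intro s' hs'
          obtain ⟨tr'', htr'', hm''⟩ := hν s' hs'
          obtain ⟨t'', ht'', rfl⟩ := htr''
          obtain ⟨tr''', htr''', hm'''⟩ := h1 t'' ht''
          exact ⟨tr''', htr''', matches_transfer hφinj μ ν s' t'' tr'''
            (hfreshC C hC s' hs') (hfreshP t'' ht'') hm'' hm'''⟩
        · exact matches_transfer hφinj μ ν s t tr
            (hfreshC C hC s (Or.inl hsC)) (hfreshP t ht) hsm hm
    rw [multQ, multQ, hsetseq]
end

section
/- Let φ = γ1 ∨ … ∨ γk be a propositional formula in 3-DNF over propositional variables, where each γi is a conjunction of exactly three literals li1, li2, li3, and let C1, …, Ck be ternary relation symbols. Treating each propositional variable as a query variable, define the Boolean conjunctive queries Q() :- C1(p11, p12, p13), …, Ck(pk1, pk2, pk3) and, for each i, Q'_i() :- Ci(x1, x2, x3), x1 ∘_{i1} 0, x2 ∘_{i2} 0, x3 ∘_{i3} 0, where ∘_{ij} is '≥' if the literal lij is a positive proposition and '<' if lij is negated. Then φ is valid (true under every truth assignment) if and only if Q is contained in the union Q'_1 ∪ … ∪ Q'_k. -/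
/-- The signature with ternary relation symbols `C₁, …, C_K`. -/
def ternSig (K : ℕ) : Sig := ⟨Fin K, fun _ => 3⟩

/-- The Boolean query `Q() :- C₁(p₁₁, p₁₂, p₁₃), …, C_K(p_K1, p_K2, p_K3)` built from a
3-DNF formula with `K` clauses over `m` propositional variables, where
`γ i j = (p, sign)` gives the proposition and polarity of the `j`-th literal of the
`i`-th clause (`sign = true` for a positive literal). -/
def dnfQuery (K m : ℕ) (γ : Fin K → Fin 3 → Fin m × Bool) : CQ (ternSig K) 0 where
  nvars := m
  head := Fin.elim0
  body := ⟨Set.range (fun i : Fin K =>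
            (⟨i, fun j => Term.var (γ i j).1⟩ : RAtom (ternSig K) (Fin m))), ∅⟩

/-- The Boolean query
`Q'_i() :- C_i(x₁, x₂, x₃), x₁ ∘ᵢ₁ 0, x₂ ∘ᵢ₂ 0, x₃ ∘ᵢ₃ 0`, where `∘ᵢⱼ` is `≥` if the
`j`-th literal of clause `i` is positive and `<` otherwise. -/
def clauseQuery (K m : ℕ) (γ : Fin K → Fin 3 → Fin m × Bool) (i : Fin K) :
    CQ (ternSig K) 0 where
  nvars := 3
  head := Fin.elim0
  body := ⟨{(⟨i, fun j => Term.var j⟩ : RAtom (ternSig K) (Fin 3))},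
           Set.range (fun j : Fin 3 =>
             if (γ i j).2 then (⟨CmpOp.le, Term.const 0, Term.var j⟩ : CAtom (Fin 3))
             else ⟨CmpOp.lt, Term.var j, Term.const 0⟩)⟩

/-- A 3-DNF formula `φ = γ₁ ∨ … ∨ γ_K` is valid iff the query `Q`
is contained (under set semantics) in the union `Q'₁ ∪ … ∪ Q'_K`. -/
theorem dnf_validity_iff_union_containment
    (K m : ℕ) (hK : 1 ≤ K) (γ : Fin K → Fin 3 → Fin m × Bool) :
    (∀ a : Fin m → Bool, ∃ i : Fin K, ∀ j : Fin 3, a (γ i j).1 = (γ i j).2) ↔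
      (∀ D : DB (ternSig K), D.Finite →
        ((dnfQuery K m γ).evalS D).Nonempty →
        ∃ i : Fin K, ((clauseQuery K m γ i).evalS D).Nonempty) := by
  constructor
  · rintro hval D hDfin ⟨t, v, ⟨hrat, hcat⟩, hout⟩
    obtain ⟨i, hi⟩ := hval (fun p => decide ((0:ℚ) ≤ v p))
    refine ⟨i, Fin.elim0, fun p => v (γ i p).1, ⟨?_, ?_⟩, funext fun x => x.elim0⟩
    · intro A hA
      have hA' : A = (⟨i, fun j => Term.var j⟩ : RAtom (ternSig K) (Fin 3)) := hA
      subst hA'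
      have hmem : (⟨i, fun j => Term.var (γ i j).1⟩ : RAtom (ternSig K) (Fin m))
          ∈ (dnfQuery K m γ).body.ratoms := ⟨i, rfl⟩
      exact hrat _ hmem
    · rintro c ⟨j, rfl⟩
      have hij := hi j
      by_cases h : (γ i j).2 = true
      · have : (0:ℚ) ≤ v (γ i j).1 := by
          have := hij; rw [h] at this; exact of_decide_eq_true this
        simp [h, CAtom.holds, CmpOp.holds, Term.eval, this]
      · have hf : (γ i j).2 = false := by simpa using h
        have : ¬ ((0:ℚ) ≤ v (γ i j).1) := by
          have := hij; rw [hf] at this; exact of_decide_eq_false this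
        simp [hf, CAtom.holds, CmpOp.holds, Term.eval]
        linarith [not_le.mp this]
  · intro hcont a
    set v : Fin m → ℚ := fun p => if a p then 0 else -1 with hv
    set D : DB (ternSig K) :=
      Set.range (fun i : Fin K => (⟨i, fun j => v (γ i j).1⟩ : DFact (ternSig K))) with hD
    have hne : ((dnfQuery K m γ).evalS D).Nonempty := by
      refine ⟨fun x => x.elim0, v, ⟨?_, ?_⟩, funext fun x => x.elim0⟩
      · rintro A ⟨i, rfl⟩
        exact ⟨i, rfl⟩
      · rintro c hc
        exact absurd hc (Set.notMem_empty c)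
    obtain ⟨i, t, w, ⟨hr, hc⟩, _⟩ := hcont D (Set.finite_range _) hne
    have hmem : ((⟨i, fun j => Term.var j⟩ : RAtom (ternSig K) (Fin 3)).inst w) ∈ D :=
      hr _ rfl
    obtain ⟨i', heq⟩ := hmem
    have hrel : i' = i := congrArg DFact.rel heq
    subst hrel
    have hargs : (fun j => v (γ i' j).1) = fun j : Fin 3 => w j := by
      have h2 := heq
      dsimp only [RAtom.inst] at h2
      replace h2 := DFact.mk.inj h2
      exact eq_of_heq h2.2
    refine ⟨i', fun j => ?_⟩
    have hwj : w j = v (γ i' j).1 := (congrFun hargs j).symm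
    have hcj := hc _ ⟨j, rfl⟩
    by_cases h : (γ i' j).2 = true
    · rw [h]
      simp only [h, if_true, CAtom.holds, CmpOp.holds, Term.eval] at hcj
      by_contra hfa
      have hfa' : a (γ i' j).1 = false := by simpa using hfa
      rw [hwj, hv] at hcj
      simp [hfa'] at hcj
      linarith
    · have hf : (γ i' j).2 = false := by simpa using h
      rw [hf]
      simp [hf, CAtom.holds, CmpOp.holds, Term.eval] at hcj
      by_contra hfa
      have hfa' : a (γ i' j).1 = true := by simpa using hfa
      rw [hwj, hv] at hcj
      simp [hfa'] at hcj
end
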